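/- Let k be a field of characteristic zero, V a finite-dimensional k-vector space, and D a double Poisson bracket on the tensor algebra T(V) which is linear, i.e. D(a,b) ∈ k·1⊗V + V⊗k·1 for all a,b ∈ V. Then there exists a unique bilinear map μ : V×V → V such that D(a,b) = 1⊗μ(a,b) − μ(b,a)⊗1 for all a,b ∈ V, and μ is an associative multiplication on V. -/

import Mathlib

open TensorProduct

noncomputable section

namespace DoubleBrackets

variable (k : Type*) [Field k] (A : Type*) [Ring A] [Algebra k A]

/-- The flip `τ : A ⊗ A → A ⊗ A`, `x ⊗ y ↦ y ⊗ x`. -/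
def tau : (A ⊗[k] A) →ₗ[k] (A ⊗[k] A) := (TensorProduct.comm k A A).toLinearMap

/-- `(123)·(x⊗y⊗z) = z⊗x⊗y`. -/
def p123 : (A ⊗[k] (A ⊗[k] A)) →ₗ[k] (A ⊗[k] (A ⊗[k] A)) :=
  (TensorProduct.comm k (A ⊗[k] A) A).toLinearMap ∘ₗ (TensorProduct.assoc k A A A).symm.toLinearMap

/-- `(132)·(x⊗y⊗z) = y⊗z⊗x`. -/
def p132 : (A ⊗[k] (A ⊗[k] A)) →ₗ[k] (A ⊗[k] (A ⊗[k] A)) :=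
  (TensorProduct.assoc k A A A).toLinearMap ∘ₗ (TensorProduct.comm k A (A ⊗[k] A)).toLinearMap

/-- For a bilinear map `D : A × A → A ⊗ A` and `a ∈ A`, the map
`x ⊗ y ↦ D(a,x) ⊗ y : A ⊗ A → A ⊗ A ⊗ A`, used to form `D(a, D'(b,c)) ⊗ D''(b,c)`. -/
def applyLeft (D : A →ₗ[k] (A →ₗ[k] (A ⊗[k] A))) (a : A) :
    (A ⊗[k] A) →ₗ[k] (A ⊗[k] (A ⊗[k] A)) :=
  (TensorProduct.assoc k A A A).toLinearMap ∘ₗ TensorProduct.map (D a) LinearMap.id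

/-- The double Jacobiator
`Jac_D(a,b,c) = D(a,D'(b,c))⊗D''(b,c) + (123)·(D(b,D'(c,a))⊗D''(c,a)) + (132)·(D(c,D'(a,b))⊗D''(a,b))`. -/
def Jac (D : A →ₗ[k] (A →ₗ[k] (A ⊗[k] A))) (a b c : A) : A ⊗[k] (A ⊗[k] A) :=
  applyLeft k A D a (D b c)
    + p123 k A (applyLeft k A D b (D c a))
    + p132 k A (applyLeft k A D c (D a b))

/-- `D` is a double bracket: skew-symmetry `D(a,b) = -τ D(b,a)` and the outer Leibniz rule
`D(a,bc) = D'(a,b) ⊗ D''(a,b)c + bD'(a,c) ⊗ D''(a,c)`. -/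
def IsDoubleBracket (D : A →ₗ[k] (A →ₗ[k] (A ⊗[k] A))) : Prop :=
  (∀ a b : A, D a b = - tau k A (D b a)) ∧
  (∀ a b c : A, D a (b * c) =
      TensorProduct.map LinearMap.id (LinearMap.mulRight k c) (D a b)
      + TensorProduct.map (LinearMap.mulLeft k b) LinearMap.id (D a c))

/-- `D` is a double Poisson bracket: a double bracket with vanishing double Jacobiator. -/
def IsDoublePoissonBracket (D : A →ₗ[k] (A →ₗ[k] (A ⊗[k] A))) : Prop :=
  IsDoubleBracket k A D ∧ ∀ a b c : A, Jac k A D a b c = 0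

end DoubleBrackets

open DoubleBrackets TensorAlgebra

/-!
Write `ε` for the augmentation of `T(V)`. The functional `x ⊗ y ↦ ε(x) ιInv(y)` reads off `u` from
`1 ⊗ u + v ⊗ 1`, which defines `μ`; skew-symmetry then forces `v = -μ(b,a)`. The Leibniz rule gives
`D(x,1) = 0`, so in the double Jacobiator of three generators only the `V ⊗ 1` parts of the inner
brackets contribute, and the `V ⊗ 1 ⊗ 1` component of `Jac_D(a,b,c)` is
`μ(μ(c,b),a) - μ(c,μ(b,a))`. Its vanishing is associativity.
-/

namespace TensorAlgebra

variable {R M : Type*} [CommSemiring R] [AddCommMonoid M] [Module R M]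

@[simp]
theorem ιInv_ι (x : M) : ιInv (ι R x) = x :=
  ι_leftInverse x

@[simp]
theorem ιInv_one : ιInv (1 : TensorAlgebra R M) = 0 := by
  let : Module Rᵐᵒᵖ M := Module.compHom _ ((RingHom.id R).fromOpposite mul_comm)
  have : IsCentralScalar R M := ⟨fun _ _ => rfl⟩
  exact congrArg TrivSqZeroExt.snd (map_one toTrivSqZeroExt)

@[simp]
theorem algebraMapInv_ι (x : M) : algebraMapInv (ι R x) = 0 :=
  lift_ι_apply _ _

end TensorAlgebra

namespace DoubleBrackets

variable {k A : Type*} [Field k] [Ring A] [Algebra k A] {D : A →ₗ[k] (A →ₗ[k] (A ⊗[k] A))}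

theorem IsDoubleBracket.apply_one (hD : IsDoubleBracket k A D) (a : A) : D a 1 = 0 := by
  simpa using hD.2 a 1 1

theorem applyLeft_tmul (a x y : A) :
    applyLeft k A D a (x ⊗ₜ[k] y) = TensorProduct.assoc k A A A (D a x ⊗ₜ[k] y) :=
  rfl

theorem IsDoubleBracket.applyLeft_one_tmul (hD : IsDoubleBracket k A D) (a y : A) :
    applyLeft k A D a (1 ⊗ₜ[k] y) = 0 := by
  rw [applyLeft_tmul, hD.apply_one, zero_tmul, map_zero]

end DoubleBrackets

namespace LinearDoubleBracket

variable (k : Type*) [Field k] (V : Type*) [AddCommGroup V] [Module k V]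

local notation "T" => TensorAlgebra k V

/-- The component of `T(V) ⊗ T(V)` in `k ⊗ V`. -/
def coeffOneTmul : (T ⊗[k] T) →ₗ[k] V :=
  (TensorProduct.lid k V).toLinearMap ∘ₗ TensorProduct.map algebraMapInv.toLinearMap ιInv

/-- The component of `T(V) ⊗ T(V) ⊗ T(V)` in `V ⊗ k ⊗ k`. -/
def coeffTmulOneOne : (T ⊗[k] (T ⊗[k] T)) →ₗ[k] V :=
  (TensorProduct.rid k V).toLinearMap ∘ₗ TensorProduct.map ιInv
    ((TensorProduct.lid k k).toLinearMap ∘ₗ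
      TensorProduct.map algebraMapInv.toLinearMap algebraMapInv.toLinearMap)

variable {k V}

@[simp]
theorem coeffOneTmul_tmul (x y : T) :
    coeffOneTmul k V (x ⊗ₜ[k] y) = algebraMapInv x • ιInv y := by
  simp [coeffOneTmul]

@[simp]
theorem coeffTmulOneOne_tmul (x y z : T) :
    coeffTmulOneOne k V (x ⊗ₜ[k] (y ⊗ₜ[k] z)) = (algebraMapInv y * algebraMapInv z) • ιInv x := by
  simp [coeffTmulOneOne, smul_eq_mul]

def IsBracketOfMul (D : T →ₗ[k] (T →ₗ[k] (T ⊗[k] T))) (μ : V →ₗ[k] (V →ₗ[k] V)) : Prop :=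
  ∀ a b : V, D (ι k a) (ι k b) = (1 : T) ⊗ₜ[k] ι k (μ a b) - ι k (μ b a) ⊗ₜ[k] (1 : T)

def linearMul (D : T →ₗ[k] (T →ₗ[k] (T ⊗[k] T))) : V →ₗ[k] (V →ₗ[k] V) :=
  ((D ∘ₗ ι k).compl₂ (ι k)).compr₂ (coeffOneTmul k V)

variable {D : TensorAlgebra k V →ₗ[k]
  (TensorAlgebra k V →ₗ[k] (TensorAlgebra k V ⊗[k] TensorAlgebra k V))}

theorem linearMul_apply (a b : V) :
    linearMul D a b = coeffOneTmul k V (D (ι k a) (ι k b)) :=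
  rfl

theorem linearMul_eq_of_apply_ι_ι_eq {a b u v : V}
    (h : D (ι k a) (ι k b) = (1 : T) ⊗ₜ[k] ι k u + ι k v ⊗ₜ[k] (1 : T)) :
    linearMul D a b = u := by
  simp [linearMul_apply, h]

theorem isBracketOfMul_linearMul (hD : IsDoubleBracket k T D)
    (hlin : ∀ a b : V, ∃ u v : V, D (ι k a) (ι k b) = (1 : T) ⊗ₜ[k] ι k u + ι k v ⊗ₜ[k] (1 : T)) :
    IsBracketOfMul D (linearMul D) := by
  intro a b
  obtain ⟨u, v, h⟩ := hlin a b
  have hba : D (ι k b) (ι k a) = (1 : T) ⊗ₜ[k] ι k (-v) + ι k (-u) ⊗ₜ[k] (1 : T) := by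
    rw [hD.1, h]
    simp only [tau, map_add, LinearEquiv.coe_coe, comm_tmul, map_neg, tmul_neg, neg_tmul]
    abel
  rw [h, linearMul_eq_of_apply_ι_ι_eq h, linearMul_eq_of_apply_ι_ι_eq hba, map_neg, neg_tmul,
    sub_neg_eq_add]

theorem eq_linearMul {μ : V →ₗ[k] (V →ₗ[k] V)} (hμ : IsBracketOfMul D μ) :
    μ = linearMul D := by
  ext a b
  simp [linearMul_apply, hμ a b]

variable {μ : V →ₗ[k] (V →ₗ[k] V)}

theorem applyLeft_ι_eq (hD : IsDoubleBracket k T D) (hμ : IsBracketOfMul D μ) (a u v : V) :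
    applyLeft k T D (ι k a) ((1 : T) ⊗ₜ[k] ι k u - ι k v ⊗ₜ[k] (1 : T)) =
      ι k (μ v a) ⊗ₜ[k] ((1 : T) ⊗ₜ[k] (1 : T)) - (1 : T) ⊗ₜ[k] (ι k (μ a v) ⊗ₜ[k] (1 : T)) := by
  rw [map_sub, hD.applyLeft_one_tmul, applyLeft_tmul, hμ]
  simp only [sub_tmul, map_sub, assoc_tmul]
  abel

theorem linearMul_assoc (hD : IsDoublePoissonBracket k T D) (hμ : IsBracketOfMul D μ)
    (a b c : V) : μ (μ a b) c = μ a (μ b c) := by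
  have hJac := congrArg (coeffTmulOneOne k V) (hD.2 (ι k c) (ι k b) (ι k a))
  rw [Jac, hμ b a, hμ a c, hμ c b, applyLeft_ι_eq hD.1 hμ, applyLeft_ι_eq hD.1 hμ,
    applyLeft_ι_eq hD.1 hμ] at hJac
  simp only [p123, p132, map_add, map_sub, map_zero, LinearMap.coe_comp, Function.comp_apply,
    LinearEquiv.coe_coe, assoc_symm_tmul, comm_tmul, assoc_tmul, coeffTmulOneOne_tmul, map_one,
    algebraMapInv_ι, ιInv_one, ιInv_ι, mul_one, mul_zero, one_smul, zero_smul,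
    sub_zero, zero_sub, add_zero] at hJac
  exact add_neg_eq_zero.mp hJac

end LinearDoubleBracket

open LinearDoubleBracket in
theorem linear_double_poisson_bracket_classification_general
    (k : Type*) [Field k]
    (V : Type*) [AddCommGroup V] [Module k V]
    (D : TensorAlgebra k V →ₗ[k] (TensorAlgebra k V →ₗ[k]
          (TensorAlgebra k V ⊗[k] TensorAlgebra k V)))
    (hD : IsDoublePoissonBracket k (TensorAlgebra k V) D)
    (hlin : ∀ a b : V, ∃ u v : V,
      D (ι k a) (ι k b) =
        (1 : TensorAlgebra k V) ⊗ₜ[k] ι k u + ι k v ⊗ₜ[k] (1 : TensorAlgebra k V)) :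
    ∃ μ : V →ₗ[k] (V →ₗ[k] V),
      (∀ a b : V, D (ι k a) (ι k b) =
        (1 : TensorAlgebra k V) ⊗ₜ[k] ι k (μ a b)
          - ι k (μ b a) ⊗ₜ[k] (1 : TensorAlgebra k V)) ∧
      (∀ a b c : V, μ (μ a b) c = μ a (μ b c)) ∧
      (∀ μ' : V →ₗ[k] (V →ₗ[k] V),
        (∀ a b : V, D (ι k a) (ι k b) =
          (1 : TensorAlgebra k V) ⊗ₜ[k] ι k (μ' a b)
            - ι k (μ' b a) ⊗ₜ[k] (1 : TensorAlgebra k V)) → μ' = μ) := by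
  have hform := isBracketOfMul_linearMul hD.1 hlin
  exact ⟨linearMul D, hform, linearMul_assoc hD hform, fun _ => eq_linearMul⟩

/-- Any linear double Poisson bracket on the tensor algebra `T(V)` is of the form
`{{a,b}} = 1 ⊗ μ(a,b) - μ(b,a) ⊗ 1` for a unique bilinear map `μ`, which is moreover an
associative multiplication on `V`. -/
theorem linear_double_poisson_bracket_classification
    (k : Type*) [Field k] [CharZero k]
    (V : Type*) [AddCommGroup V] [Module k V] [FiniteDimensional k V]
    (D : TensorAlgebra k V →ₗ[k] (TensorAlgebra k V →ₗ[k]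
          (TensorAlgebra k V ⊗[k] TensorAlgebra k V)))
    (hD : IsDoublePoissonBracket k (TensorAlgebra k V) D)
    (hlin : ∀ a b : V, ∃ u v : V,
      D (ι k a) (ι k b) =
        (1 : TensorAlgebra k V) ⊗ₜ[k] ι k u + ι k v ⊗ₜ[k] (1 : TensorAlgebra k V)) :
    ∃ μ : V →ₗ[k] (V →ₗ[k] V),
      (∀ a b : V, D (ι k a) (ι k b) =
        (1 : TensorAlgebra k V) ⊗ₜ[k] ι k (μ a b)
          - ι k (μ b a) ⊗ₜ[k] (1 : TensorAlgebra k V)) ∧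
      (∀ a b c : V, μ (μ a b) c = μ a (μ b c)) ∧
      (∀ μ' : V →ₗ[k] (V →ₗ[k] V),
        (∀ a b : V, D (ι k a) (ι k b) =
          (1 : TensorAlgebra k V) ⊗ₜ[k] ι k (μ' a b)
            - ι k (μ' b a) ⊗ₜ[k] (1 : TensorAlgebra k V)) → μ' = μ) :=
  linear_double_poisson_bracket_classification_general k V D hD hlin
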